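/- Let G = Θ_{p,q,r} with p ≤ q ≤ r, where p < q, r ≥ 3 and p + r is even. Then the set S = {w_{(r−p)/2}, w_{(r+p)/2}} is an edge metric generator of G. -/
import Mathlib


/-- Vertices of the Θ-graph `Θ_{p,q,r}`: the two branching vertices `u` and `v`,
together with the internal vertices of the three `u`–`v` paths of lengths `p`, `q`, `r`.
`a i` is the internal vertex `u_{i+1}` of the first path, `b i` is `v_{i+1}` of the
second path, and `c i` is `w_{i+1}` of the third path. -/
inductive ThetaVert (p q r : ℕ) : Type where
  | u : ThetaVert p q r
  | v : ThetaVert p q r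
  | a : Fin (p - 1) → ThetaVert p q r
  | b : Fin (q - 1) → ThetaVert p q r
  | c : Fin (r - 1) → ThetaVert p q r
  deriving DecidableEq

/-- Base adjacency relation for the Θ-graph (one direction of each edge). -/
def thetaRel (p q r : ℕ) : ThetaVert p q r → ThetaVert p q r → Prop
  | .u, .v => p = 1 ∨ q = 1 ∨ r = 1
  | .u, .a i => (i : ℕ) = 0
  | .u, .b i => (i : ℕ) = 0
  | .u, .c i => (i : ℕ) = 0
  | .a i, .v => (i : ℕ) = p - 2
  | .b i, .v => (i : ℕ) = q - 2
  | .c i, .v => (i : ℕ) = r - 2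
  | .a i, .a j => (j : ℕ) = (i : ℕ) + 1
  | .b i, .b j => (j : ℕ) = (i : ℕ) + 1
  | .c i, .c j => (j : ℕ) = (i : ℕ) + 1
  | _, _ => False

/-- The Θ-graph `Θ_{p,q,r}`. -/
def thetaGraph (p q r : ℕ) : SimpleGraph (ThetaVert p q r) :=
  SimpleGraph.fromRel (thetaRel p q r)

/-- The vertex `u_i` (for `0 ≤ i ≤ p`) on the first path of `Θ_{p,q,r}`. -/
def uV (p q r : ℕ) (i : ℕ) : ThetaVert p q r :=
  if h : 0 < i ∧ i < p then ThetaVert.a ⟨i - 1, by omega⟩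
  else if i = 0 then ThetaVert.u else ThetaVert.v

/-- The vertex `v_i` (for `0 ≤ i ≤ q`) on the second path of `Θ_{p,q,r}`. -/
def vV (p q r : ℕ) (i : ℕ) : ThetaVert p q r :=
  if h : 0 < i ∧ i < q then ThetaVert.b ⟨i - 1, by omega⟩
  else if i = 0 then ThetaVert.u else ThetaVert.v

/-- The vertex `w_i` (for `0 ≤ i ≤ r`) on the third path of `Θ_{p,q,r}`. -/
def wV (p q r : ℕ) (i : ℕ) : ThetaVert p q r :=
  if h : 0 < i ∧ i < r then ThetaVert.c ⟨i - 1, by omega⟩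
  else if i = 0 then ThetaVert.u else ThetaVert.v

/-- `S` is a vertex metric generator of `G`: every pair of distinct vertices is
distinguished by some vertex of `S`. -/
def IsVertexMetricGenerator {V : Type*} (G : SimpleGraph V) (S : Set V) : Prop :=
  ∀ x x' : V, x ≠ x' → ∃ s ∈ S, G.dist s x ≠ G.dist s x'

/-- The vertex metric dimension of `G`: the least cardinality of a vertex metric generator. -/
noncomputable def vertexMetricDim {V : Type*} (G : SimpleGraph V) : ℕ :=
  sInf {n : ℕ | ∃ S : Finset V, S.card = n ∧ IsVertexMetricGenerator G ↑S}

/-- Distance from a vertex `x` to an edge `e`: the minimum of the distances to its endpoints. -/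
noncomputable def edgeDist {V : Type*} (G : SimpleGraph V) (x : V) (e : Sym2 V) : ℕ :=
  Sym2.lift ⟨fun y z => min (G.dist x y) (G.dist x z), fun _ _ => min_comm _ _⟩ e

/-- `S` is an edge metric generator of `G`: every pair of distinct edges is
distinguished by some vertex of `S`. -/
def IsEdgeMetricGenerator {V : Type*} (G : SimpleGraph V) (S : Set V) : Prop :=
  ∀ e ∈ G.edgeSet, ∀ f ∈ G.edgeSet, e ≠ f → ∃ s ∈ S, edgeDist G s e ≠ edgeDist G s f

/-- The edge metric dimension of `G`: the least cardinality of an edge metric generator. -/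
noncomputable def edgeMetricDim {V : Type*} (G : SimpleGraph V) : ℕ :=
  sInf {n : ℕ | ∃ S : Finset V, S.card = n ∧ IsEdgeMetricGenerator G ↑S}

/-- candidate distance from `w_m` -/
def fF (p q r m : ℕ) : ThetaVert p q r → ℕ
  | .u => min m (p + (r - m))
  | .v => min (r - m) (p + m)
  | .a i => min (min m (p + (r - m)) + ((i : ℕ) + 1)) (min (r - m) (p + m) + (p - ((i : ℕ) + 1)))
  | .b j => min (min m (p + (r - m)) + ((j : ℕ) + 1)) (min (r - m) (p + m) + (q - ((j : ℕ) + 1)))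
  | .c k => min ((m - ((k : ℕ) + 1)) + (((k : ℕ) + 1) - m))
      ((p + r) - ((m - ((k : ℕ) + 1)) + (((k : ℕ) + 1) - m)))

lemma uV_zero (p q r : ℕ) : uV p q r 0 = ThetaVert.u := by simp [uV]
lemma uV_last (p q r : ℕ) (hp : 1 ≤ p) : uV p q r p = ThetaVert.v := by
  simp [uV]; omega
lemma uV_mid (p q r n : ℕ) (hn : n < p - 1) : uV p q r (n + 1) = ThetaVert.a ⟨n, hn⟩ := by
  rw [uV, dif_pos ⟨by omega, by omega⟩]; rfl
lemma vV_zero (p q r : ℕ) : vV p q r 0 = ThetaVert.u := by simp [vV]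
lemma vV_last (p q r : ℕ) (hq : 1 ≤ q) : vV p q r q = ThetaVert.v := by
  simp [vV]; omega
lemma vV_mid (p q r n : ℕ) (hn : n < q - 1) : vV p q r (n + 1) = ThetaVert.b ⟨n, hn⟩ := by
  rw [vV, dif_pos ⟨by omega, by omega⟩]; rfl
lemma wV_zero (p q r : ℕ) : wV p q r 0 = ThetaVert.u := by simp [wV]
lemma wV_last (p q r : ℕ) (hr : 1 ≤ r) : wV p q r r = ThetaVert.v := by
  simp [wV]; omega
lemma wV_mid (p q r n : ℕ) (hn : n < r - 1) : wV p q r (n + 1) = ThetaVert.c ⟨n, hn⟩ := by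
  rw [wV, dif_pos ⟨by omega, by omega⟩]; rfl

lemma adj_uV (p q r : ℕ) (i : ℕ) (hi : i < p) :
    (thetaGraph p q r).Adj (uV p q r i) (uV p q r (i + 1)) := by
  rw [thetaGraph, SimpleGraph.fromRel_adj]
  rcases Nat.eq_zero_or_pos i with rfl | hi0
  · rcases Nat.lt_or_ge 1 p with h1 | h1
    · rw [uV_zero, uV_mid p q r 0 (by omega)]
      exact ⟨by simp, Or.inl (by simp [thetaRel])⟩
    · have hp1 : p = 1 := by omega
      rw [uV_zero, show (0:ℕ)+1 = p by omega, uV_last p q r (by omega)]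
      exact ⟨by simp, Or.inl (Or.inl hp1)⟩
  · rcases Nat.lt_or_ge (i + 1) p with h1 | h1
    · rw [show i = (i-1)+1 by omega, uV_mid p q r (i-1) (by omega),
        uV_mid p q r (i-1+1) (by omega)]
      refine ⟨by simp [Fin.ext_iff] <;> omega, Or.inl ?_⟩
      simp [thetaRel] <;> omega
    · have h2 : uV p q r (i+1) = ThetaVert.v := by
        rw [show i + 1 = p by omega]; exact uV_last p q r (by omega)
      rw [h2, show i = (i-1)+1 by omega, uV_mid p q r (i-1) (by omega)]
      refine ⟨by simp, Or.inl ?_⟩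
      simp [thetaRel] <;> omega

lemma adj_vV (p q r : ℕ) (j : ℕ) (hj : j < q) :
    (thetaGraph p q r).Adj (vV p q r j) (vV p q r (j + 1)) := by
  rw [thetaGraph, SimpleGraph.fromRel_adj]
  rcases Nat.eq_zero_or_pos j with rfl | hj0
  · rcases Nat.lt_or_ge 1 q with h1 | h1
    · rw [vV_zero, vV_mid p q r 0 (by omega)]
      exact ⟨by simp, Or.inl (by simp [thetaRel])⟩
    · have hq1 : q = 1 := by omega
      rw [vV_zero, show (0:ℕ)+1 = q by omega, vV_last p q r (by omega)]
      exact ⟨by simp, Or.inl (Or.inr (Or.inl hq1))⟩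
  · rcases Nat.lt_or_ge (j + 1) q with h1 | h1
    · rw [show j = (j-1)+1 by omega, vV_mid p q r (j-1) (by omega),
        vV_mid p q r (j-1+1) (by omega)]
      refine ⟨by simp [Fin.ext_iff] <;> omega, Or.inl ?_⟩
      simp [thetaRel] <;> omega
    · have h2 : vV p q r (j+1) = ThetaVert.v := by
        rw [show j + 1 = q by omega]; exact vV_last p q r (by omega)
      rw [h2, show j = (j-1)+1 by omega, vV_mid p q r (j-1) (by omega)]
      refine ⟨by simp, Or.inl ?_⟩
      simp [thetaRel] <;> omega

lemma adj_wV (p q r : ℕ) (k : ℕ) (hk : k < r) :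
    (thetaGraph p q r).Adj (wV p q r k) (wV p q r (k + 1)) := by
  rw [thetaGraph, SimpleGraph.fromRel_adj]
  rcases Nat.eq_zero_or_pos k with rfl | hk0
  · rcases Nat.lt_or_ge 1 r with h1 | h1
    · rw [wV_zero, wV_mid p q r 0 (by omega)]
      exact ⟨by simp, Or.inl (by simp [thetaRel])⟩
    · have hr1 : r = 1 := by omega
      rw [wV_zero, show (0:ℕ)+1 = r by omega, wV_last p q r (by omega)]
      exact ⟨by simp, Or.inl (Or.inr (Or.inr hr1))⟩
  · rcases Nat.lt_or_ge (k + 1) r with h1 | h1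
    · rw [show k = (k-1)+1 by omega, wV_mid p q r (k-1) (by omega),
        wV_mid p q r (k-1+1) (by omega)]
      refine ⟨by simp [Fin.ext_iff] <;> omega, Or.inl ?_⟩
      simp [thetaRel] <;> omega
    · have h2 : wV p q r (k+1) = ThetaVert.v := by
        rw [show k + 1 = r by omega]; exact wV_last p q r (by omega)
      rw [h2, show k = (k-1)+1 by omega, wV_mid p q r (k-1) (by omega)]
      refine ⟨by simp, Or.inl ?_⟩
      simp [thetaRel] <;> omega

open SimpleGraph in
lemma exists_walk_uV (p q r : ℕ) :
    ∀ n i, i + n ≤ p → ∃ W : (thetaGraph p q r).Walk (uV p q r i) (uV p q r (i + n)),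
      W.length = n := by
  intro n
  induction n with
  | zero => exact fun i _ => ⟨.nil, rfl⟩
  | succ n ih =>
    intro i h
    obtain ⟨W, hW⟩ := ih (i + 1) (by omega)
    refine ⟨(Walk.cons (adj_uV p q r i (by omega)) W).copy rfl (by congr 1; omega), ?_⟩
    simp [hW]

open SimpleGraph in
lemma exists_walk_vV (p q r : ℕ) :
    ∀ n i, i + n ≤ q → ∃ W : (thetaGraph p q r).Walk (vV p q r i) (vV p q r (i + n)),
      W.length = n := by
  intro n
  induction n with
  | zero => exact fun i _ => ⟨.nil, rfl⟩
  | succ n ih =>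
    intro i h
    obtain ⟨W, hW⟩ := ih (i + 1) (by omega)
    refine ⟨(Walk.cons (adj_vV p q r i (by omega)) W).copy rfl (by congr 1; omega), ?_⟩
    simp [hW]

open SimpleGraph in
lemma exists_walk_wV (p q r : ℕ) :
    ∀ n i, i + n ≤ r → ∃ W : (thetaGraph p q r).Walk (wV p q r i) (wV p q r (i + n)),
      W.length = n := by
  intro n
  induction n with
  | zero => exact fun i _ => ⟨.nil, rfl⟩
  | succ n ih =>
    intro i h
    obtain ⟨W, hW⟩ := ih (i + 1) (by omega)
    refine ⟨(Walk.cons (adj_wV p q r i (by omega)) W).copy rfl (by congr 1; omega), ?_⟩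
    simp [hW]

/-- distance between consecutive `uV` positions -/
lemma dist_uV_le (p q r : ℕ) (i j : ℕ) (hij : i ≤ j) (hj : j ≤ p) :
    (thetaGraph p q r).dist (uV p q r i) (uV p q r j) ≤ j - i := by
  obtain ⟨W, hW⟩ := exists_walk_uV p q r (j - i) i (by omega)
  have := SimpleGraph.dist_le (W.copy rfl (congrArg (uV p q r) (by omega : i + (j - i) = j)))
  simpa [hW] using this

lemma dist_vV_le (p q r : ℕ) (i j : ℕ) (hij : i ≤ j) (hj : j ≤ q) :
    (thetaGraph p q r).dist (vV p q r i) (vV p q r j) ≤ j - i := by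
  obtain ⟨W, hW⟩ := exists_walk_vV p q r (j - i) i (by omega)
  have := SimpleGraph.dist_le (W.copy rfl (congrArg (vV p q r) (by omega : i + (j - i) = j)))
  simpa [hW] using this

lemma dist_wV_le (p q r : ℕ) (i j : ℕ) (hij : i ≤ j) (hj : j ≤ r) :
    (thetaGraph p q r).dist (wV p q r i) (wV p q r j) ≤ j - i := by
  obtain ⟨W, hW⟩ := exists_walk_wV p q r (j - i) i (by omega)
  have := SimpleGraph.dist_le (W.copy rfl (congrArg (wV p q r) (by omega : i + (j - i) = j)))
  simpa [hW] using this

lemma theta_connected (p q r : ℕ) (hp : 1 ≤ p) (hq : 1 ≤ q) (hr : 1 ≤ r) :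
    (thetaGraph p q r).Connected := by
  rw [SimpleGraph.connected_iff]
  refine ⟨?_, ⟨ThetaVert.u⟩⟩
  have hu : ∀ x : ThetaVert p q r, (thetaGraph p q r).Reachable ThetaVert.u x := by
    intro x
    match x with
    | .u => exact SimpleGraph.Reachable.refl _
    | .v =>
      obtain ⟨W, _⟩ := exists_walk_uV p q r p 0 (by omega)
      exact ⟨W.copy (uV_zero p q r) (by rw [Nat.zero_add]; exact uV_last p q r hp)⟩
    | .a i =>
      obtain ⟨W, _⟩ := exists_walk_uV p q r ((i : ℕ) + 1) 0 (by have := i.isLt; omega)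
      exact ⟨W.copy (uV_zero p q r) (by rw [Nat.zero_add]; exact uV_mid p q r _ i.isLt ▸ (by congr))⟩
    | .b j =>
      obtain ⟨W, _⟩ := exists_walk_vV p q r ((j : ℕ) + 1) 0 (by have := j.isLt; omega)
      exact ⟨W.copy (vV_zero p q r) (by rw [Nat.zero_add]; exact vV_mid p q r _ j.isLt ▸ (by congr))⟩
    | .c k =>
      obtain ⟨W, _⟩ := exists_walk_wV p q r ((k : ℕ) + 1) 0 (by have := k.isLt; omega)
      exact ⟨W.copy (wV_zero p q r) (by rw [Nat.zero_add]; exact wV_mid p q r _ k.isLt ▸ (by congr))⟩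
  intro x y
  exact (hu x).symm.trans (hu y)

lemma uV_a (p q r : ℕ) (i : Fin (p - 1)) : uV p q r ((i : ℕ) + 1) = ThetaVert.a i :=
  uV_mid p q r _ i.isLt
lemma vV_b (p q r : ℕ) (j : Fin (q - 1)) : vV p q r ((j : ℕ) + 1) = ThetaVert.b j :=
  vV_mid p q r _ j.isLt
lemma wV_c (p q r : ℕ) (k : Fin (r - 1)) : wV p q r ((k : ℕ) + 1) = ThetaVert.c k :=
  wV_mid p q r _ k.isLt

lemma wV_mid' (p q r m : ℕ) (h1 : 1 ≤ m) (h2 : m ≤ r - 1) :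
    wV p q r m = ThetaVert.c ⟨m - 1, by omega⟩ := by
  rw [wV, dif_pos ⟨by omega, by omega⟩]

lemma fF_lip (p q r m : ℕ) (hp : 1 ≤ p) (hpq : p ≤ q) (hqr : q ≤ r) (hm : m ≤ r) :
    ∀ x y : ThetaVert p q r, thetaRel p q r x y →
      fF p q r m y ≤ fF p q r m x + 1 ∧ fF p q r m x ≤ fF p q r m y + 1 := by
  intro x y h
  cases x <;> cases y <;> simp only [thetaRel] at h
  case u.v =>
    rcases h with h | h | h <;>
      exact ⟨by simp only [fF]; omega, by simp only [fF]; omega⟩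
  case u.a i =>
    have hb := i.isLt
    exact ⟨by simp only [fF]; omega, by simp only [fF]; omega⟩
  case u.b j =>
    have hb := j.isLt
    exact ⟨by simp only [fF]; omega, by simp only [fF]; omega⟩
  case u.c k =>
    have hb := k.isLt
    exact ⟨by simp only [fF]; omega, by simp only [fF]; omega⟩
  case a.v i =>
    have hb := i.isLt
    exact ⟨by simp only [fF]; omega, by simp only [fF]; omega⟩
  case b.v j =>
    have hb := j.isLt
    exact ⟨by simp only [fF]; omega, by simp only [fF]; omega⟩
  case c.v k =>
    have hb := k.isLt
    exact ⟨by simp only [fF]; omega, by simp only [fF]; omega⟩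
  case a.a i j =>
    have hb := i.isLt; have hb' := j.isLt
    exact ⟨by simp only [fF]; omega, by simp only [fF]; omega⟩
  case b.b i j =>
    have hb := i.isLt; have hb' := j.isLt
    exact ⟨by simp only [fF]; omega, by simp only [fF]; omega⟩
  case c.c i j =>
    have hb := i.isLt; have hb' := j.isLt
    exact ⟨by simp only [fF]; omega, by simp only [fF]; omega⟩

lemma fF_adj (p q r m : ℕ) (hp : 1 ≤ p) (hpq : p ≤ q) (hqr : q ≤ r) (hm : m ≤ r)
    {x y : ThetaVert p q r} (h : (thetaGraph p q r).Adj x y) :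
    fF p q r m y ≤ fF p q r m x + 1 := by
  rw [thetaGraph, SimpleGraph.fromRel_adj] at h
  rcases h with ⟨-, h | h⟩
  · exact (fF_lip p q r m hp hpq hqr hm x y h).1
  · exact (fF_lip p q r m hp hpq hqr hm y x h).2

lemma fF_le_length (p q r m : ℕ) (hp : 1 ≤ p) (hpq : p ≤ q) (hqr : q ≤ r) (hm : m ≤ r)
    {x y : ThetaVert p q r} (W : (thetaGraph p q r).Walk x y) :
    fF p q r m y ≤ fF p q r m x + W.length := by
  induction W with
  | nil => simp
  | cons hadj W ih =>
    have := fF_adj p q r m hp hpq hqr hm hadj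
    simp only [SimpleGraph.Walk.length_cons]
    omega

lemma dist_fF (p q r m : ℕ) (hp : 1 ≤ p) (hpq : p ≤ q) (hqr : q ≤ r)
    (hm1 : 1 ≤ m) (hm2 : m ≤ r - 1) (hr : 2 ≤ r) (x : ThetaVert p q r) :
    (thetaGraph p q r).dist (wV p q r m) x = fF p q r m x := by
  have hm : m ≤ r := by omega
  have hconn := theta_connected p q r hp (hp.trans hpq) (by omega)
  have tri : ∀ x y z : ThetaVert p q r,
      (thetaGraph p q r).dist x z ≤ (thetaGraph p q r).dist x y + (thetaGraph p q r).dist y z :=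
    fun _ _ _ => hconn.dist_triangle
  have h0 : fF p q r m (wV p q r m) = 0 := by
    rw [wV_mid' p q r m hm1 hm2]
    simp only [fF]
    omega
  -- basic distance bounds
  have hU1 : (thetaGraph p q r).dist (wV p q r m) ThetaVert.u ≤ m := by
    have := dist_wV_le p q r 0 m (by omega) hm
    rw [wV_zero, SimpleGraph.dist_comm] at this
    simpa using this
  have hV1 : (thetaGraph p q r).dist (wV p q r m) ThetaVert.v ≤ r - m := by
    have := dist_wV_le p q r m r hm le_rfl
    rwa [wV_last p q r (by omega)] at this
  have hUV : (thetaGraph p q r).dist ThetaVert.u ThetaVert.v ≤ p := by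
    have := dist_uV_le p q r 0 p (by omega) le_rfl
    rw [uV_zero, uV_last p q r hp] at this
    simpa using this
  have hU2 : (thetaGraph p q r).dist (wV p q r m) ThetaVert.u ≤ p + (r - m) := by
    have h1 := tri (wV p q r m) ThetaVert.v ThetaVert.u
    rw [SimpleGraph.dist_comm (u := ThetaVert.v)] at h1
    omega
  have hV2 : (thetaGraph p q r).dist (wV p q r m) ThetaVert.v ≤ p + m := by
    have h1 := tri (wV p q r m) ThetaVert.u ThetaVert.v
    omega
  have hu : (thetaGraph p q r).dist (wV p q r m) ThetaVert.u ≤ min m (p + (r - m)) :=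
    le_min hU1 hU2
  have hv : (thetaGraph p q r).dist (wV p q r m) ThetaVert.v ≤ min (r - m) (p + m) :=
    le_min hV1 hV2
  have upper : (thetaGraph p q r).dist (wV p q r m) x ≤ fF p q r m x := by
    match x with
    | .u => exact hu
    | .v => exact hv
    | .a i =>
      have hb := i.isLt
      have h1 : (thetaGraph p q r).dist ThetaVert.u (ThetaVert.a i) ≤ (i : ℕ) + 1 := by
        have := dist_uV_le p q r 0 ((i : ℕ) + 1) (by omega) (by omega)
        rw [uV_zero, uV_a] at this
        simpa using this
      have h2 : (thetaGraph p q r).dist ThetaVert.v (ThetaVert.a i) ≤ p - ((i : ℕ) + 1) := by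
        have := dist_uV_le p q r ((i : ℕ) + 1) p (by omega) le_rfl
        rw [uV_a, uV_last p q r hp, SimpleGraph.dist_comm] at this
        exact this
      have t1 := tri (wV p q r m) ThetaVert.u (ThetaVert.a i)
      have t2 := tri (wV p q r m) ThetaVert.v (ThetaVert.a i)
      simp only [fF]
      omega
    | .b j =>
      have hb := j.isLt
      have h1 : (thetaGraph p q r).dist ThetaVert.u (ThetaVert.b j) ≤ (j : ℕ) + 1 := by
        have := dist_vV_le p q r 0 ((j : ℕ) + 1) (by omega) (by omega)
        rw [vV_zero, vV_b] at this
        simpa using this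
      have h2 : (thetaGraph p q r).dist ThetaVert.v (ThetaVert.b j) ≤ q - ((j : ℕ) + 1) := by
        have := dist_vV_le p q r ((j : ℕ) + 1) q (by omega) le_rfl
        rw [vV_b, vV_last p q r (by omega), SimpleGraph.dist_comm] at this
        exact this
      have t1 := tri (wV p q r m) ThetaVert.u (ThetaVert.b j)
      have t2 := tri (wV p q r m) ThetaVert.v (ThetaVert.b j)
      simp only [fF]
      omega
    | .c k =>
      have hb := k.isLt
      have h1 : (thetaGraph p q r).dist ThetaVert.u (ThetaVert.c k) ≤ (k : ℕ) + 1 := by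
        have := dist_wV_le p q r 0 ((k : ℕ) + 1) (by omega) (by omega)
        rw [wV_zero, wV_c] at this
        simpa using this
      have h2 : (thetaGraph p q r).dist ThetaVert.v (ThetaVert.c k) ≤ r - ((k : ℕ) + 1) := by
        have := dist_wV_le p q r ((k : ℕ) + 1) r (by omega) le_rfl
        rw [wV_c, wV_last p q r (by omega), SimpleGraph.dist_comm] at this
        exact this
      have hnear : (thetaGraph p q r).dist (wV p q r m) (ThetaVert.c k) ≤
          (m - ((k : ℕ) + 1)) + (((k : ℕ) + 1) - m) := by
        rcases le_total m ((k : ℕ) + 1) with hmk | hmk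
        · have := dist_wV_le p q r m ((k : ℕ) + 1) hmk (by omega)
          rw [wV_c] at this
          omega
        · have := dist_wV_le p q r ((k : ℕ) + 1) m hmk hm
          rw [wV_c, SimpleGraph.dist_comm] at this
          omega
      have t1 := tri (wV p q r m) ThetaVert.u (ThetaVert.c k)
      have t2 := tri (wV p q r m) ThetaVert.v (ThetaVert.c k)
      simp only [fF]
      omega
  have lower : fF p q r m x ≤ (thetaGraph p q r).dist (wV p q r m) x := by
    obtain ⟨W, hW⟩ := (hconn.preconnected (wV p q r m) x).exists_walk_length_eq_dist
    have := fF_le_length p q r m hp hpq hqr hm W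
    omega
  omega

lemma rel_char (p q r : ℕ) (hp : 1 ≤ p) (hq2 : 2 ≤ q) (hr3 : 3 ≤ r)
    (x y : ThetaVert p q r) (h : thetaRel p q r x y) :
    (∃ i < p, s(x, y) = s(uV p q r i, uV p q r (i + 1))) ∨
    (∃ j < q, s(x, y) = s(vV p q r j, vV p q r (j + 1))) ∨
    (∃ k < r, s(x, y) = s(wV p q r k, wV p q r (k + 1))) := by
  cases x <;> cases y <;> simp only [thetaRel] at h
  case u.v =>
    have hp1 : p = 1 := by rcases h with h | h | h <;> omega
    refine Or.inl ⟨0, by omega, ?_⟩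
    rw [uV_zero, show (0 : ℕ) + 1 = p by omega, uV_last p q r hp]
  case u.a i =>
    have hb := i.isLt
    refine Or.inl ⟨0, by omega, ?_⟩
    rw [uV_zero, show (0 : ℕ) + 1 = (i : ℕ) + 1 by omega, uV_a]
  case u.b j =>
    have hb := j.isLt
    refine Or.inr (Or.inl ⟨0, by omega, ?_⟩)
    rw [vV_zero, show (0 : ℕ) + 1 = (j : ℕ) + 1 by omega, vV_b]
  case u.c k =>
    have hb := k.isLt
    refine Or.inr (Or.inr ⟨0, by omega, ?_⟩)
    rw [wV_zero, show (0 : ℕ) + 1 = (k : ℕ) + 1 by omega, wV_c]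
  case a.v i =>
    have hb := i.isLt
    refine Or.inl ⟨p - 1, by omega, ?_⟩
    rw [show p - 1 + 1 = p by omega, uV_last p q r hp,
      show p - 1 = (i : ℕ) + 1 by omega, uV_a]
  case b.v j =>
    have hb := j.isLt
    refine Or.inr (Or.inl ⟨q - 1, by omega, ?_⟩)
    rw [show q - 1 + 1 = q by omega, vV_last p q r (by omega),
      show q - 1 = (j : ℕ) + 1 by omega, vV_b]
  case c.v k =>
    have hb := k.isLt
    refine Or.inr (Or.inr ⟨r - 1, by omega, ?_⟩)
    rw [show r - 1 + 1 = r by omega, wV_last p q r (by omega),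
      show r - 1 = (k : ℕ) + 1 by omega, wV_c]
  case a.a i j =>
    have hb := i.isLt; have hb' := j.isLt
    refine Or.inl ⟨(i : ℕ) + 1, by omega, ?_⟩
    rw [uV_a, show (i : ℕ) + 1 + 1 = (j : ℕ) + 1 by omega, uV_a]
  case b.b i j =>
    have hb := i.isLt; have hb' := j.isLt
    refine Or.inr (Or.inl ⟨(i : ℕ) + 1, by omega, ?_⟩)
    rw [vV_b, show (i : ℕ) + 1 + 1 = (j : ℕ) + 1 by omega, vV_b]
  case c.c i j =>
    have hb := i.isLt; have hb' := j.isLt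
    refine Or.inr (Or.inr ⟨(i : ℕ) + 1, by omega, ?_⟩)
    rw [wV_c, show (i : ℕ) + 1 + 1 = (j : ℕ) + 1 by omega, wV_c]

lemma edge_char (p q r : ℕ) (hp : 1 ≤ p) (hq2 : 2 ≤ q) (hr3 : 3 ≤ r)
    (e : Sym2 (ThetaVert p q r)) (he : e ∈ (thetaGraph p q r).edgeSet) :
    (∃ i < p, e = s(uV p q r i, uV p q r (i + 1))) ∨
    (∃ j < q, e = s(vV p q r j, vV p q r (j + 1))) ∨
    (∃ k < r, e = s(wV p q r k, wV p q r (k + 1))) := by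
  induction e using Sym2.ind with
  | _ x y =>
    rw [SimpleGraph.mem_edgeSet, thetaGraph, SimpleGraph.fromRel_adj] at he
    rcases he with ⟨-, h | h⟩
    · exact rel_char p q r hp hq2 hr3 x y h
    · rw [Sym2.eq_swap]
      exact rel_char p q r hp hq2 hr3 y x h

lemma fF_uV (p q r m i : ℕ) (hp : 1 ≤ p) (hm : m ≤ r) (hi : i ≤ p) :
    fF p q r m (uV p q r i) =
      min (min m (p + (r - m)) + i) (min (r - m) (p + m) + (p - i)) := by
  rcases Nat.eq_zero_or_pos i with rfl | h0
  · rw [uV_zero]; simp only [fF]; omega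
  · rcases Nat.lt_or_ge i p with h1 | h1
    · rw [show i = (i - 1) + 1 by omega, uV_mid p q r (i - 1) (by omega)]
      simp only [fF]
    · rw [show i = p by omega, uV_last p q r hp]
      simp only [fF]; omega

lemma fF_vV (p q r m j : ℕ) (hq : 1 ≤ q) (hpq : p ≤ q) (hm : m ≤ r) (hj : j ≤ q) :
    fF p q r m (vV p q r j) =
      min (min m (p + (r - m)) + j) (min (r - m) (p + m) + (q - j)) := by
  rcases Nat.eq_zero_or_pos j with rfl | h0
  · rw [vV_zero]; simp only [fF]; omega
  · rcases Nat.lt_or_ge j q with h1 | h1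
    · rw [show j = (j - 1) + 1 by omega, vV_mid p q r (j - 1) (by omega)]
      simp only [fF]
    · rw [show j = q by omega, vV_last p q r hq]
      simp only [fF]; omega

lemma fF_wV (p q r m k : ℕ) (hr : 1 ≤ r) (hm : m ≤ r) (hk : k ≤ r) :
    fF p q r m (wV p q r k) =
      min ((m - k) + (k - m)) ((p + r) - ((m - k) + (k - m))) := by
  rcases Nat.eq_zero_or_pos k with rfl | h0
  · rw [wV_zero]; simp only [fF]; omega
  · rcases Nat.lt_or_ge k r with h1 | h1
    · rw [show k = (k - 1) + 1 by omega, wV_mid p q r (k - 1) (by omega)]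
      simp only [fF]
    · rw [show k = r by omega, wV_last p q r hr]
      simp only [fF]; omega

set_option maxHeartbeats 2000000 in
/-- in `Θ_{p,q,r}` with `1 ≤ p ≤ q ≤ r`, `q ≥ 2`, `p < q`, `r ≥ 3`
and `p + r` even, the set `{w_{(r-p)/2}, w_{(r+p)/2}}` is an edge metric
generator. -/
theorem isEdgeGenerator_case_i (p q r : ℕ)
    (hp : 1 ≤ p) (hpq : p ≤ q) (hqr : q ≤ r) (hq2 : 2 ≤ q)
    (hlt : p < q) (hr3 : 3 ≤ r) (he : Even (p + r)) :
    IsEdgeMetricGenerator (thetaGraph p q r)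
      {wV p q r ((r - p) / 2), wV p q r ((r + p) / 2)} := by
  obtain ⟨n, hn⟩ := he
  intro e heS f hfS hef
  have hds : ∀ x, (thetaGraph p q r).dist (wV p q r ((r - p) / 2)) x
      = fF p q r ((r - p) / 2) x :=
    fun x => dist_fF p q r _ hp hpq hqr (by omega) (by omega) (by omega) x
  have hdt : ∀ x, (thetaGraph p q r).dist (wV p q r ((r + p) / 2)) x
      = fF p q r ((r + p) / 2) x :=
    fun x => dist_fF p q r _ hp hpq hqr (by omega) (by omega) (by omega) x
  -- edge values
  have FsA : ∀ i < p, edgeDist (thetaGraph p q r) (wV p q r ((r - p) / 2))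
      s(uV p q r i, uV p q r (i + 1)) =
      min ((r - p) / 2 + i) ((r + p) / 2 + (p - (i + 1))) := by
    intro i hi
    simp only [edgeDist, Sym2.lift_mk]
    rw [hds, hds, fF_uV p q r _ i hp (by omega) (by omega),
      fF_uV p q r _ (i + 1) hp (by omega) (by omega)]
    omega
  have FtA : ∀ i < p, edgeDist (thetaGraph p q r) (wV p q r ((r + p) / 2))
      s(uV p q r i, uV p q r (i + 1)) = (r + p) / 2 - (i + 1) := by
    intro i hi
    simp only [edgeDist, Sym2.lift_mk]
    rw [hdt, hdt, fF_uV p q r _ i hp (by omega) (by omega),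
      fF_uV p q r _ (i + 1) hp (by omega) (by omega)]
    omega
  have FsB : ∀ j < q, edgeDist (thetaGraph p q r) (wV p q r ((r - p) / 2))
      s(vV p q r j, vV p q r (j + 1)) =
      min ((r - p) / 2 + j) ((r + p) / 2 + (q - (j + 1))) := by
    intro j hj
    simp only [edgeDist, Sym2.lift_mk]
    rw [hds, hds, fF_vV p q r _ j (by omega) hpq (by omega) (by omega),
      fF_vV p q r _ (j + 1) (by omega) hpq (by omega) (by omega)]
    omega
  have FtB : ∀ j < q, edgeDist (thetaGraph p q r) (wV p q r ((r + p) / 2))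
      s(vV p q r j, vV p q r (j + 1)) =
      min ((r + p) / 2 + j) ((r - p) / 2 + (q - (j + 1))) := by
    intro j hj
    simp only [edgeDist, Sym2.lift_mk]
    rw [hdt, hdt, fF_vV p q r _ j (by omega) hpq (by omega) (by omega),
      fF_vV p q r _ (j + 1) (by omega) hpq (by omega) (by omega)]
    omega
  have FsC : ∀ k < r, edgeDist (thetaGraph p q r) (wV p q r ((r - p) / 2))
      s(wV p q r k, wV p q r (k + 1)) =
      ((r - p) / 2 - (k + 1)) + (k - (r - p) / 2) := by
    intro k hk
    simp only [edgeDist, Sym2.lift_mk]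
    rw [hds, hds, fF_wV p q r _ k (by omega) (by omega) (by omega),
      fF_wV p q r _ (k + 1) (by omega) (by omega) (by omega)]
    omega
  have FtC : ∀ k < r, edgeDist (thetaGraph p q r) (wV p q r ((r + p) / 2))
      s(wV p q r k, wV p q r (k + 1)) =
      ((r + p) / 2 - (k + 1)) + (k - (r + p) / 2) := by
    intro k hk
    simp only [edgeDist, Sym2.lift_mk]
    rw [hdt, hdt, fF_wV p q r _ k (by omega) (by omega) (by omega),
      fF_wV p q r _ (k + 1) (by omega) (by omega) (by omega)]
    omega
  have hs2 : (r - p) / 2 + (r - p) / 2 = r - p := by omega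
  have ht2 : (r + p) / 2 + (r + p) / 2 = r + p := by omega
  by_contra hcon
  push_neg at hcon
  have h1 := hcon (wV p q r ((r - p) / 2)) (Set.mem_insert _ _)
  have h2 := hcon (wV p q r ((r + p) / 2)) (Set.mem_insert_of_mem _ rfl)
  rcases edge_char p q r hp hq2 hr3 e heS with ⟨i, hi, rfl⟩ | ⟨j, hj, rfl⟩ | ⟨k, hk, rfl⟩ <;>
    rcases edge_char p q r hp hq2 hr3 f hfS with ⟨i', hi', rfl⟩ | ⟨j', hj', rfl⟩ | ⟨k', hk', rfl⟩ <;>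
    obtain ⟨S, hS⟩ : ∃ S, (r - p) / 2 = S := ⟨_, rfl⟩ <;>
    obtain ⟨T, hT⟩ : ∃ T, (r + p) / 2 = T := ⟨_, rfl⟩
  · rw [FsA i hi, FsA i' hi'] at h1
    rw [FtA i hi, FtA i' hi'] at h2
    rw [hS] at h1 hs2; rw [hT] at h1 h2 ht2
    exact hef (by rw [show i = i' by omega])
  · rw [FsA i hi, FsB j' hj'] at h1
    rw [FtA i hi, FtB j' hj'] at h2
    rw [hS] at h1 h2 hs2; rw [hT] at h1 h2 ht2
    have d2 : T - (i + 1) = S + (q - (j' + 1)) := by clear h1 hcon hef; omega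
    clear h2
    omega
  · rw [FsA i hi, FsC k' hk'] at h1
    rw [FtA i hi, FtC k' hk'] at h2
    rw [hS] at h1 hs2; rw [hT] at h1 h2 ht2
    omega
  · rw [FsB j hj, FsA i' hi'] at h1
    rw [FtB j hj, FtA i' hi'] at h2
    rw [hS] at h1 h2 hs2; rw [hT] at h1 h2 ht2
    have d2 : T - (i' + 1) = S + (q - (j + 1)) := by clear h1 hcon hef; omega
    clear h2
    omega
  · rw [FsB j hj, FsB j' hj'] at h1
    rw [FtB j hj, FtB j' hj'] at h2
    rw [hS] at h1 h2 hs2; rw [hT] at h1 h2 ht2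
    have d1 : j = j' ∨ S + j = T + (q - (j' + 1)) ∨ S + j' = T + (q - (j + 1)) := by
      clear h2 hcon hef; omega
    have d2 : j = j' ∨ T + j = S + (q - (j' + 1)) ∨ T + j' = S + (q - (j + 1)) := by
      clear h1 d1 hcon hef; omega
    have hjj : j = j' := by clear h1 h2 hcon hef; omega
    subst hjj
    exact hef rfl
  · rw [FsB j hj, FsC k' hk'] at h1
    rw [FtB j hj, FtC k' hk'] at h2
    rw [hS] at h1 h2 hs2; rw [hT] at h1 h2 ht2
    omega
  · rw [FsC k hk, FsA i' hi'] at h1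
    rw [FtC k hk, FtA i' hi'] at h2
    rw [hS] at h1 hs2; rw [hT] at h1 h2 ht2
    omega
  · rw [FsC k hk, FsB j' hj'] at h1
    rw [FtC k hk, FtB j' hj'] at h2
    rw [hS] at h1 h2 hs2; rw [hT] at h1 h2 ht2
    omega
  · rw [FsC k hk, FsC k' hk'] at h1
    rw [FtC k hk, FtC k' hk'] at h2
    rw [hS] at h1 hs2; rw [hT] at h2 ht2
    have d1 : k = k' ∨ k + k' + 1 = S + S := by clear h2 ht2 hcon hef; omega
    have d2 : k = k' ∨ k + k' + 1 = T + T := by clear h1 hs2 d1 hcon hef; omega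
    have hkk : k = k' := by clear h1 h2 hcon hef; omega
    subst hkk
    exact hef rfl
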